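/- For all real a > 0 and t ≥ 0, erf(√(a t)) = 1 − (2/π) ∫₀^{π/2} e^{-a t sec²θ} dθ; equivalently, erfc(√(a t)) = (2/π) ∫₀^{π/2} e^{-a t sec²θ} dθ. -/

import Mathlib

open Real MeasureTheory Set

/-- Lower incomplete gamma function `γ(s,x) = ∫₀ˣ u^(s-1) e^(-u) du`. -/
noncomputable def lowerGamma (s x : ℝ) : ℝ := ∫ u in (0:ℝ)..x, u ^ (s - 1) * Real.exp (-u)

/-- Error function `erf x = (2/√π) ∫₀ˣ e^(-u²) du`. -/
noncomputable def erf (x : ℝ) : ℝ := (2 / Real.sqrt π) * ∫ u in (0:ℝ)..x, Real.exp (-u ^ 2)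

/-- Complementary error function. -/
noncomputable def erfc (x : ℝ) : ℝ := 1 - erf x

/-! With `x = a t`, the substitution `u = tan θ` turns `∫₀^{π/2} e^{-x sec²θ} dθ` into
`∫₀^∞ e^{-x(1+u²)} / (1+u²) du`. Writing `e^{-x(1+u²)} / (1+u²) = ∫ₓ^∞ e^{-s(1+u²)} ds` and
exchanging the order of integration, the inner Gaussian integral is `e^{-s} √π / (2√s)`, and the
substitution `s = v²` turns `∫ₓ^∞ e^{-s} √π / (2√s) ds` into
`√π ∫_{√x}^∞ e^{-v²} dv = (π / 2) erfc √x`. -/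

lemma image_tan_Ioo_zero_pi_div_two : tan '' Ioo 0 (π / 2) = Ioi 0 := by
  ext y
  constructor
  · rintro ⟨θ, ⟨hθ₀, hθ₁⟩, rfl⟩
    exact tan_pos_of_pos_of_lt_pi_div_two hθ₀ hθ₁
  · intro hy
    exact ⟨arctan y, ⟨arctan_zero ▸ arctan_strictMono hy, arctan_lt_pi_div_two y⟩, tan_arctan y⟩

lemma integral_Ioi_eq_integral_Ioo_tan {E : Type*} [NormedAddCommGroup E] [NormedSpace ℝ E]
    (g : ℝ → E) :
    ∫ u in Ioi 0, g u = ∫ θ in Ioo 0 (π / 2), (cos θ ^ 2)⁻¹ • g (tan θ) := by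
  have hsub : Ioo 0 (π / 2) ⊆ Ioo (-(π / 2)) (π / 2) :=
    Ioo_subset_Ioo_left (by linarith [pi_pos])
  have hcos : ∀ θ ∈ Ioo 0 (π / 2), 0 < cos θ := fun θ hθ => cos_pos_of_mem_Ioo (hsub hθ)
  rw [← image_tan_Ioo_zero_pi_div_two, integral_image_eq_integral_abs_deriv_smul measurableSet_Ioo
    (fun θ hθ => (hasDerivAt_tan (hcos θ hθ).ne').hasDerivWithinAt) (injOn_tan.mono hsub)]
  refine setIntegral_congr_fun measurableSet_Ioo fun θ hθ => ?_
  rw [abs_of_pos (by have := hcos θ hθ; positivity), one_div]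

lemma image_sq_Ioi_sqrt {x : ℝ} (hx : 0 ≤ x) : (· ^ 2) '' Ioi √x = Ioi x := by
  ext s
  constructor
  · rintro ⟨v, hv, rfl⟩
    exact (sqrt_lt' ((sqrt_nonneg x).trans_lt hv)).1 hv
  · intro hs
    exact ⟨√s, sqrt_lt_sqrt hx hs, sq_sqrt (hx.trans hs.le)⟩

lemma integral_Ioi_eq_integral_Ioi_sqrt {E : Type*} [NormedAddCommGroup E] [NormedSpace ℝ E]
    {x : ℝ} (hx : 0 ≤ x) (g : ℝ → E) :
    ∫ s in Ioi x, g s = ∫ v in Ioi √x, (2 * v) • g (v ^ 2) := by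
  have hpos : ∀ v ∈ Ioi √x, 0 < v := fun v hv => (sqrt_nonneg x).trans_lt hv
  rw [← image_sq_Ioi_sqrt hx, integral_image_eq_integral_abs_deriv_smul measurableSet_Ioi
    (fun v _ => (hasDerivAt_pow 2 v).hasDerivWithinAt)
    ((pow_left_strictMonoOn₀ two_ne_zero).injOn.mono fun v hv => (hpos v hv).le)]
  refine setIntegral_congr_fun measurableSet_Ioi fun v hv => ?_
  rw [abs_of_pos (by have := hpos v hv; positivity)]
  norm_num

lemma integral_Ioi_exp_neg_mul {c : ℝ} (hc : 0 < c) (x : ℝ) :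
    ∫ s in Ioi x, exp (-(c * s)) = exp (-(c * x)) / c := by
  simpa [neg_mul, neg_div_neg_eq] using integral_exp_mul_Ioi (neg_lt_zero.2 hc) x

lemma integral_Ioi_exp_neg_mul_one_add_sq (s : ℝ) :
    ∫ u in Ioi 0, exp (-(s * (1 + u ^ 2))) = exp (-s) * (√(π / s) / 2) := by
  rw [← integral_gaussian_Ioi, ← integral_const_mul]
  congr 1 with u
  rw [← exp_add]
  ring_nf

lemma integrable_exp_neg_mul_one_add_sq {x : ℝ} (hx : 0 < x) :
    Integrable (Function.uncurry fun u s => exp (-(s * (1 + u ^ 2))))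
      ((volume.restrict (Ioi 0)).prod (volume.restrict (Ioi x))) := by
  have hbound : Integrable (fun p : ℝ × ℝ => exp (-x * p.1 ^ 2) * exp (-p.2))
      ((volume.restrict (Ioi 0)).prod (volume.restrict (Ioi x))) :=
    (integrableOn_Ioi_exp_neg_mul_sq_iff.2 hx).mul_prod (integrableOn_exp_neg_Ioi x)
  refine hbound.mono (by fun_prop) ?_
  rw [Measure.prod_restrict]
  refine ae_restrict_of_forall_mem (measurableSet_Ioi.prod measurableSet_Ioi) ?_
  rintro ⟨u, s⟩ ⟨hu, hs⟩
  simp only [Function.uncurry_apply_pair, norm_eq_abs, abs_exp, ← exp_add]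
  gcongr
  nlinarith [mem_Ioi.1 hs, sq_nonneg u]

lemma integral_exp_neg_div_cos_sq {x : ℝ} (hx : 0 ≤ x) :
    ∫ θ in (0 : ℝ)..(π / 2), exp (-(x / cos θ ^ 2)) = √π * ∫ v in Ioi √x, exp (-v ^ 2) := by
  rcases hx.eq_or_lt with rfl | hx
  · have hgauss := integral_gaussian_Ioi 1
    simp only [neg_mul, one_mul, div_one] at hgauss
    simp [hgauss, mul_div_assoc', mul_self_sqrt pi_pos.le]
  have hcos : ∀ θ ∈ Ioo 0 (π / 2), cos θ ≠ 0 := fun θ hθ =>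
    (cos_pos_of_mem_Ioo (Ioo_subset_Ioo_left (by linarith [pi_pos]) hθ)).ne'
  calc ∫ θ in (0 : ℝ)..(π / 2), exp (-(x / cos θ ^ 2))
      = ∫ u in Ioi 0, (1 + u ^ 2)⁻¹ * exp (-(x * (1 + u ^ 2))) := by
        rw [intervalIntegral.integral_of_le (by positivity), integral_Ioc_eq_integral_Ioo,
          integral_Ioi_eq_integral_Ioo_tan]
        refine setIntegral_congr_fun measurableSet_Ioo fun θ hθ => ?_
        have htan : 1 + tan θ ^ 2 = (cos θ ^ 2)⁻¹ := by
          rw [← inv_one_add_tan_sq (hcos θ hθ), inv_inv]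
        rw [smul_eq_mul, htan, inv_inv, div_eq_mul_inv, inv_mul_cancel_left₀
          (pow_ne_zero 2 (hcos θ hθ))]
    _ = ∫ u in Ioi 0, ∫ s in Ioi x, exp (-(s * (1 + u ^ 2))) := by
        congr 1 with u
        simp_rw [mul_comm _ (1 + u ^ 2)]
        rw [integral_Ioi_exp_neg_mul (by positivity), div_eq_inv_mul]
    _ = ∫ s in Ioi x, ∫ u in Ioi 0, exp (-(s * (1 + u ^ 2))) :=
        integral_integral_swap (integrable_exp_neg_mul_one_add_sq hx)
    _ = ∫ s in Ioi x, exp (-s) * (√(π / s) / 2) := by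
        simp_rw [integral_Ioi_exp_neg_mul_one_add_sq]
    _ = √π * ∫ v in Ioi √x, exp (-v ^ 2) := by
        rw [integral_Ioi_eq_integral_Ioi_sqrt hx.le, ← integral_const_mul]
        refine setIntegral_congr_fun measurableSet_Ioi fun v hv => ?_
        have hv : 0 < v := (sqrt_nonneg x).trans_lt hv
        rw [smul_eq_mul, sqrt_div pi_pos.le, sqrt_sq hv.le]
        field_simp

lemma erfc_eq_integral_Ioi {y : ℝ} (hy : 0 ≤ y) :
    erfc y = 2 / √π * ∫ u in Ioi y, exp (-u ^ 2) := by
  have hint : IntegrableOn (fun u => exp (-u ^ 2)) (Ioi 0) := by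
    simpa using integrableOn_Ioi_exp_neg_mul_sq_iff.2 one_pos
  have hgauss : ∫ u in Ioi 0, exp (-u ^ 2) = √π / 2 := by
    simpa using integral_gaussian_Ioi 1
  rw [erfc, erf, ← intervalIntegral.integral_Ioi_sub_Ioi hint hy, hgauss, mul_sub,
    div_mul_div_cancel₀ (sqrt_pos.2 pi_pos).ne', div_self two_ne_zero]
  ring

lemma erfc_sqrt_eq_integral_exp_neg_div_cos_sq {x : ℝ} (hx : 0 ≤ x) :
    erfc √x = 2 / π * ∫ θ in (0 : ℝ)..(π / 2), exp (-(x / cos θ ^ 2)) := by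
  rw [erfc_eq_integral_Ioi (sqrt_nonneg x), integral_exp_neg_div_cos_sq hx, ← mul_assoc]
  congr 1
  field_simp
  rw [sq_sqrt pi_pos.le]

theorem stmt_8 (a t : ℝ) (ha : 0 < a) (ht : 0 ≤ t) :
    erf (Real.sqrt (a * t))
      = 1 - (2 / π) * ∫ θ in (0:ℝ)..(π / 2), Real.exp (-(a * t / Real.cos θ ^ 2))
    ∧ erfc (Real.sqrt (a * t))
      = (2 / π) * ∫ θ in (0:ℝ)..(π / 2), Real.exp (-(a * t / Real.cos θ ^ 2)) := by
  have h := erfc_sqrt_eq_integral_exp_neg_div_cos_sq (mul_nonneg ha.le ht)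
  exact ⟨by rw [← h, erfc]; ring, h⟩
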